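/- arXiv:2506.10873 — 6 statements merged into one kernel-verified Lean document; each statement's English description precedes it below -/
import Mathlib

section
/- Let ρ be an n×n Hermitian complex matrix, H Hermitian, and (L_k)_{k∈K} a finite family of n×n complex matrices such that L_k ρ + ρ L_k† = 0 for every k. Define K = Σ_k (L_k† L_k + L_k L_k) + 2iH. Then 𝓛(ρ) = 0 if and only if Kρ + ρK† = 0; in fact 𝓛(ρ) = −½(Kρ + ρK†). -/
open Matrix

/-- The Lindbladian associated with Hamiltonian `H` and jump operators `L k`. -/
noncomputable def Lindblad {n : ℕ} {K : Type*} [Fintype K]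
    (H : Matrix (Fin n) (Fin n) ℂ) (L : K → Matrix (Fin n) (Fin n) ℂ)
    (ρ : Matrix (Fin n) (Fin n) ℂ) : Matrix (Fin n) (Fin n) ℂ :=
  (-Complex.I) • (H * ρ - ρ * H) +
    ∑ k, (L k * ρ * (L k)ᴴ - (1 / 2 : ℂ) • ((L k)ᴴ * L k * ρ + ρ * ((L k)ᴴ * L k)))

/-- If `L_k ρ + ρ L_k† = 0` for all `k`, then with
`K = Σ_k (L_k† L_k + L_k L_k) + 2iH`, one has `𝓛(ρ) = −½(Kρ + ρK†)`, and in
particular `𝓛(ρ) = 0 ↔ Kρ + ρK† = 0`. -/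
theorem lindblad_eq_lyapunov {n : ℕ} {K : Type*} [Fintype K]
    (ρ H : Matrix (Fin n) (Fin n) ℂ) (L : K → Matrix (Fin n) (Fin n) ℂ)
    (hρ : ρ.IsHermitian) (hH : H.IsHermitian)
    (hL : ∀ k, L k * ρ + ρ * (L k)ᴴ = 0)
    (Kmat : Matrix (Fin n) (Fin n) ℂ)
    (hK : Kmat = (∑ k, ((L k)ᴴ * L k + L k * L k)) + (2 * Complex.I) • H) :
    Lindblad H L ρ = (-(1 / 2 : ℂ)) • (Kmat * ρ + ρ * Kmatᴴ) ∧
      (Lindblad H L ρ = 0 ↔ Kmat * ρ + ρ * Kmatᴴ = 0) := by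
  have h1 : ∀ k, L k * ρ * (L k)ᴴ
      = (-(1/2 : ℂ)) • (L k * L k * ρ + ρ * ((L k)ᴴ * (L k)ᴴ)) := by
    intro k
    have e1 : L k * ρ = -(ρ * (L k)ᴴ) := eq_neg_of_add_eq_zero_left (hL k)
    have e2 : ρ * (L k)ᴴ = -(L k * ρ) := eq_neg_of_add_eq_zero_right (hL k)
    have a1 : L k * ρ * (L k)ᴴ = -(ρ * ((L k)ᴴ * (L k)ᴴ)) := by
      rw [e1]; noncomm_ring
    have a2 : L k * ρ * (L k)ᴴ = -(L k * L k * ρ) := by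
      rw [mul_assoc, e2]; noncomm_ring
    have b1 : ρ * ((L k)ᴴ * (L k)ᴴ) = -(L k * ρ * (L k)ᴴ) := by rw [a1, neg_neg]
    have b2 : L k * L k * ρ = -(L k * ρ * (L k)ᴴ) := by rw [a2, neg_neg]
    rw [b1, b2]
    module
  have hsum : ∀ k, L k * ρ * (L k)ᴴ - (1/2:ℂ) • ((L k)ᴴ * L k * ρ + ρ * ((L k)ᴴ * L k))
      = (-(1/2:ℂ)) • ((((L k)ᴴ * L k + L k * L k)) * ρ
          + ρ * (((L k)ᴴ * L k + L k * L k)ᴴ)) := by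
    intro k
    rw [h1 k]
    simp only [conjTranspose_add, conjTranspose_mul, conjTranspose_conjTranspose,
      add_mul, mul_add]
    module
  have hstar : star (2 * Complex.I) = -(2 * Complex.I) := by simp
  have main : Lindblad H L ρ = (-(1 / 2 : ℂ)) • (Kmat * ρ + ρ * Kmatᴴ) := by
    subst hK
    unfold Lindblad
    have hH' : Hᴴ = H := hH
    rw [Finset.sum_congr rfl fun k _ => hsum k]
    rw [conjTranspose_add, conjTranspose_sum, conjTranspose_smul, hH', hstar,
      add_mul, mul_add, Finset.sum_mul, Finset.mul_sum]
    simp only [conjTranspose_add, conjTranspose_mul, conjTranspose_conjTranspose,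
      smul_add, Finset.smul_sum, smul_mul_assoc, mul_smul_comm, smul_smul, smul_sub,
      neg_mul, mul_neg, neg_smul, neg_neg]
    rw [Finset.sum_add_distrib]
    have hc : (1/2 : ℂ) * (2*Complex.I) = Complex.I := by ring
    norm_num [smul_smul, hc]
    abel
  refine ⟨main, ?_⟩
  rw [main]
  constructor
  · intro h
    rcases smul_eq_zero.mp h with h' | h'
    · norm_num at h'
    · exact h'
  · intro h
    rw [h, smul_zero]
end

section
/- Let ρ be an n×n positive semidefinite Hermitian complex matrix with support projection P (the orthogonal projection onto the range of ρ), and let B be any n×n complex matrix. Then Bρ + ρB† = 0 if and only if (1 − P) B P = 0 and the matrix (P B P)·ρ is anti-Hermitian, i.e. ((P B P)ρ)† = −(P B P)ρ. -/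
open Matrix
open scoped ComplexOrder

/-- `P` is the orthogonal projection onto the range of `ρ`. -/
def IsSupportProjection {n : ℕ} (ρ P : Matrix (Fin n) (Fin n) ℂ) : Prop :=
  P.IsHermitian ∧ P * P = P ∧ P * ρ = ρ ∧ ∃ Y, P = ρ * Y

/-- For a positive semidefinite `ρ` with support projection `P`,
`Bρ + ρB† = 0` iff `(1 − P) B P = 0` and `(P B P) ρ` is anti-Hermitian. -/
theorem lyapunov_solution_iff {n : ℕ}
    (ρ P B : Matrix (Fin n) (Fin n) ℂ)
    (hρ : ρ.PosSemidef) (hP : IsSupportProjection ρ P) :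
    B * ρ + ρ * Bᴴ = 0 ↔
      ((1 - P) * B * P = 0 ∧ ((P * B * P) * ρ)ᴴ = -((P * B * P) * ρ)) := by
  obtain ⟨hPH, hPP, hPρ, Y, hY⟩ := hP
  have hρH : ρᴴ = ρ := hρ.1
  have hρP : ρ * P = ρ := by
    have h := conjTranspose_mul P ρ
    rw [hPρ, hρH, hPH.eq] at h
    exact h.symm
  have hPBPρ : P * B * P * ρ = P * (B * ρ) := by
    rw [mul_assoc (P * B), hPρ, mul_assoc]
  constructor
  · intro h
    have hρB : ρ * Bᴴ = -(B * ρ) := eq_neg_of_add_eq_zero_right h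
    have hQρ : (1 - P) * (B * ρ) = 0 := by
      have hBρ : B * ρ = -(ρ * Bᴴ) := eq_neg_of_add_eq_zero_left h
      rw [hBρ, mul_neg, ← mul_assoc, sub_mul, one_mul, hPρ, sub_self, zero_mul, neg_zero]
    have hPBρ : P * (B * ρ) = B * ρ := by
      have h2 : B * ρ - P * (B * ρ) = 0 := by
        calc B * ρ - P * (B * ρ) = (1 - P) * (B * ρ) := by noncomm_ring
        _ = 0 := hQρ
      exact (sub_eq_zero.mp h2).symm
    refine ⟨?_, ?_⟩
    · calc (1 - P) * B * P = (1 - P) * (B * ρ) * Y := by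
            rw [hY]; noncomm_ring
        _ = 0 := by rw [hQρ, zero_mul]
    · have hLHS : ((P * B * P) * ρ)ᴴ = ρ * (Bᴴ * P) := by
        simp only [conjTranspose_mul, hρH, hPH.eq, Matrix.mul_assoc]
        rw [← Matrix.mul_assoc ρ P, hρP]
      rw [hLHS, ← mul_assoc, hρB, neg_mul, mul_assoc, hρP, ← hPBρ, ← hPBPρ]
  · rintro ⟨h1, h2⟩
    have hBP : B * P = P * B * P := by
      have h3 : B * P - P * B * P = 0 := by
        calc B * P - P * B * P = (1 - P) * B * P := by noncomm_ring
        _ = 0 := h1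
      exact sub_eq_zero.mp h3
    have hBρ : B * ρ = P * B * P * ρ := by
      conv_lhs => rw [← hPρ, ← mul_assoc, hBP]
    have hρB : ρ * Bᴴ = (B * ρ)ᴴ := by rw [conjTranspose_mul, hρH]
    rw [hρB, hBρ, h2, add_neg_cancel]
end

section
/- Let D be an n×n real diagonal positive definite matrix and let (S_k)_{k∈K} be a finite family of anti-Hermitian n×n complex matrices (S_k† = −S_k). If every diagonal entry of the matrix Σ_k ( S_k (D⁻¹ S_k − S_k D⁻¹) − (D⁻¹ S_k − S_k D⁻¹) S_k ) vanishes, then D S_k = S_k D for every k. -/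
open Matrix

/-- If `D` is a real diagonal positive definite matrix, the `S_k` are
anti-Hermitian, and all diagonal entries of
`Σ_k (S_k [D⁻¹, S_k] − [D⁻¹, S_k] S_k)` vanish, then every `S_k` commutes
with `D`. -/
theorem commute_of_diag_vanish_antiHermitian {n : ℕ} {K : Type*} [Fintype K]
    (d : Fin n → ℝ) (hd : ∀ i, 0 < d i)
    (D : Matrix (Fin n) (Fin n) ℂ)
    (hD : D = Matrix.diagonal fun i => (d i : ℂ))
    (S : K → Matrix (Fin n) (Fin n) ℂ)
    (hS : ∀ k, (S k)ᴴ = -(S k))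
    (hdiag : ∀ i,
      (∑ k, (S k * (D⁻¹ * S k - S k * D⁻¹) - (D⁻¹ * S k - S k * D⁻¹) * S k)) i i
        = 0) :
    ∀ k, D * S k = S k * D := by
  subst hD
  have hd0 : ∀ i, d i ≠ 0 := fun i => (hd i).ne'
  have hc0 : ∀ i, ((d i : ℂ)) ≠ 0 := fun i => by
    exact_mod_cast Complex.ofReal_ne_zero.mpr (hd0 i)
  have hinv : (Matrix.diagonal fun i => (d i : ℂ))⁻¹
      = Matrix.diagonal fun i => ((d i : ℂ))⁻¹ := by
    apply Matrix.inv_eq_right_inv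
    rw [Matrix.diagonal_mul_diagonal]
    ext i j
    rcases eq_or_ne i j with rfl | hij
    · simp [mul_inv_cancel₀ (hc0 i)]
    · simp [Matrix.diagonal_apply_ne _ hij, Matrix.one_apply_ne hij]
  set a : K → Fin n → Fin n → ℝ := fun k i j => Complex.normSq (S k i j) with ha
  have hSij : ∀ k i j, S k j i = -(starRingEnd ℂ) (S k i j) := by
    intro k i j
    have h := congrFun (congrFun (hS k) j) i
    simp only [Matrix.conjTranspose_apply, Matrix.neg_apply, RCLike.star_def] at h
    linear_combination h
  have hsym : ∀ k i j, a k i j = a k j i := by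
    intro k i j
    rw [ha]
    simp only [hSij k j i]
    simp [Complex.normSq_conj]
  have key : ∀ i,
      (∑ k, (S k * ((Matrix.diagonal fun i => (d i : ℂ))⁻¹ * S k
          - S k * (Matrix.diagonal fun i => (d i : ℂ))⁻¹)
        - ((Matrix.diagonal fun i => (d i : ℂ))⁻¹ * S k
          - S k * (Matrix.diagonal fun i => (d i : ℂ))⁻¹) * S k)) i i
      = 2 * ((∑ k, ∑ j, (((d i)⁻¹ - (d j)⁻¹) * a k i j) : ℝ) : ℂ) := by
    intro i
    rw [Matrix.sum_apply]
    push_cast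
    rw [Finset.mul_sum]
    refine Finset.sum_congr rfl fun k _ => ?_
    have hM : ∀ p q : Fin n, ((Matrix.diagonal fun i => ((d i : ℝ) : ℂ))⁻¹ * S k
          - S k * (Matrix.diagonal fun i => ((d i : ℝ) : ℂ))⁻¹) p q
        = ((d p : ℝ) : ℂ)⁻¹ * S k p q - S k p q * ((d q : ℝ) : ℂ)⁻¹ := by
      intro p q
      rw [hinv]
      simp [Matrix.sub_apply, Matrix.diagonal_mul, Matrix.mul_diagonal]
    simp only [Matrix.sub_apply, Matrix.mul_apply, hM]
    rw [← Finset.sum_sub_distrib, Finset.mul_sum]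
    refine Finset.sum_congr rfl fun j _ => ?_
    rw [hSij k i j]
    have : ((Complex.normSq (S k i j) : ℝ) : ℂ) = S k i j * (starRingEnd ℂ) (S k i j) :=
      (Complex.mul_conj _).symm
    rw [ha]
    push_cast [this]
    ring
  have hzero : ∀ i, (∑ k, ∑ j, (((d i)⁻¹ - (d j)⁻¹) * a k i j) : ℝ) = 0 := by
    intro i
    have h := hdiag i
    rw [key i] at h
    rcases mul_eq_zero.mp h with h2 | h2
    · exact absurd h2 two_ne_zero
    · exact_mod_cast h2
  -- weighted sum
  have htot : ∑ i, ∑ k, ∑ j, (1 - d i / d j) * a k i j = 0 := by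
    have : ∀ i, ∑ k, ∑ j, (1 - d i / d j) * a k i j
        = d i * ∑ k, ∑ j, (((d i)⁻¹ - (d j)⁻¹) * a k i j) := by
      intro i
      rw [Finset.mul_sum]
      refine Finset.sum_congr rfl fun k _ => ?_
      rw [Finset.mul_sum]
      refine Finset.sum_congr rfl fun j _ => ?_
      rw [← mul_assoc, mul_sub, mul_inv_cancel₀ (hd0 i), div_eq_mul_inv]
    simp [this, hzero]
  have htot' : ∑ i, ∑ k, ∑ j, (1 - d j / d i) * a k i j = 0 := by
    have e : ∀ k, ∑ i, ∑ j, (1 - d j / d i) * a k i j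
        = ∑ i, ∑ j, (1 - d i / d j) * a k i j := by
      intro k
      rw [Finset.sum_comm]
      refine Finset.sum_congr rfl fun i _ => Finset.sum_congr rfl fun j _ => ?_
      rw [hsym k j i]
    calc ∑ i, ∑ k, ∑ j, (1 - d j / d i) * a k i j
        = ∑ k, ∑ i, ∑ j, (1 - d j / d i) * a k i j := Finset.sum_comm
      _ = ∑ k, ∑ i, ∑ j, (1 - d i / d j) * a k i j :=
          Finset.sum_congr rfl fun k _ => e k
      _ = ∑ i, ∑ k, ∑ j, (1 - d i / d j) * a k i j := Finset.sum_comm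
      _ = 0 := htot
  have hquad : ∑ i, ∑ k, ∑ j, ((d i - d j)^2 / (d i * d j)) * a k i j = 0 := by
    have : ∀ i k j, ((d i - d j)^2 / (d i * d j)) * a k i j
        = -((1 - d i / d j) * a k i j) - (1 - d j / d i) * a k i j := by
      intro i k j
      field_simp [hd0 i, hd0 j]
      ring
    simp only [this]
    simp [Finset.sum_sub_distrib, Finset.sum_neg_distrib, htot, htot']
  have hterm : ∀ k i j, ((d i - d j)^2 / (d i * d j)) * a k i j = 0 := by
    have hnn : ∀ k i j, 0 ≤ ((d i - d j)^2 / (d i * d j)) * a k i j := fun k i j =>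
      mul_nonneg (div_nonneg (sq_nonneg _) (le_of_lt (mul_pos (hd i) (hd j))))
        (Complex.normSq_nonneg _)
    intro k i j
    have h1 := (Finset.sum_eq_zero_iff_of_nonneg (fun i _ =>
      Finset.sum_nonneg fun k _ => Finset.sum_nonneg fun j _ => hnn k i j)).mp hquad
        i (Finset.mem_univ i)
    have h2 := (Finset.sum_eq_zero_iff_of_nonneg (fun k _ =>
      Finset.sum_nonneg fun j _ => hnn k i j)).mp h1 k (Finset.mem_univ k)
    exact (Finset.sum_eq_zero_iff_of_nonneg (fun j _ => hnn k i j)).mp h2 j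
      (Finset.mem_univ j)
  intro k
  ext i j
  rw [Matrix.diagonal_mul, Matrix.mul_diagonal]
  rcases eq_or_ne (d i) (d j) with hij | hij
  · rw [hij, mul_comm]
  · have hz : a k i j = 0 := by
      have := hterm k i j
      have hpos : (d i - d j)^2 / (d i * d j) ≠ 0 := by
        apply div_ne_zero
        · exact pow_ne_zero _ (sub_ne_zero_of_ne hij)
        · exact (mul_pos (hd i) (hd j)).ne'
      exact (mul_eq_zero.mp this).resolve_left hpos
    have : S k i j = 0 := by
      have := Complex.normSq_eq_zero.mp hz
      exact this
    simp [this]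
end

section
/- Let D be an n×n real diagonal positive definite matrix, let (U_k)_{k∈K} be a finite family of unitary n×n complex matrices, and let κ_k > 0 be positive reals. If every diagonal entry of the matrix Σ_k κ_k (D − U_k† D U_k) vanishes, then D U_k = U_k D for every k. -/
open Matrix Finset

/-- If `D` is a real diagonal positive definite matrix, the `U_k` are unitary,
the `κ_k` are positive reals, and all diagonal entries of
`Σ_k κ_k (D − U_k† D U_k)` vanish, then every `U_k` commutes with `D`. -/
theorem commute_of_diag_vanish_unitary {n : ℕ} {K : Type*} [Fintype K]
    (d : Fin n → ℝ) (hd : ∀ i, 0 < d i)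
    (D : Matrix (Fin n) (Fin n) ℂ)
    (hD : D = Matrix.diagonal fun i => (d i : ℂ))
    (U : K → Matrix (Fin n) (Fin n) ℂ)
    (hU : ∀ k, (U k)ᴴ * U k = 1 ∧ U k * (U k)ᴴ = 1)
    (κ : K → ℝ) (hκ : ∀ k, 0 < κ k)
    (hdiag : ∀ i, (∑ k, (κ k : ℂ) • (D - (U k)ᴴ * D * U k)) i i = 0) :
    ∀ k, D * U k = U k * D := by
  classical
  set a : K → Fin n → Fin n → ℝ := fun k j i => Complex.normSq (U k j i) with ha
  -- column sums of |U|² are 1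
  have hcol : ∀ k i, ∑ j, a k j i = 1 := by
    intro k i
    have h := congrArg (fun M => M i i) (hU k).1
    simp only [Matrix.mul_apply, Matrix.one_apply_eq, Matrix.conjTranspose_apply] at h
    have : ((∑ j, a k j i : ℝ) : ℂ) = 1 := by
      push_cast
      rw [← h]
      exact Finset.sum_congr rfl fun j _ => Complex.normSq_eq_conj_mul_self
    exact_mod_cast this
  -- row sums of |U|² are 1
  have hrow : ∀ k j, ∑ i, a k j i = 1 := by
    intro k j
    have h := congrArg (fun M => M j j) (hU k).2
    simp only [Matrix.mul_apply, Matrix.one_apply_eq, Matrix.conjTranspose_apply] at h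
    have : ((∑ i, a k j i : ℝ) : ℂ) = 1 := by
      push_cast
      rw [← h]
      refine Finset.sum_congr rfl fun i _ => ?_
      rw [mul_comm]
      exact Complex.normSq_eq_conj_mul_self
    exact_mod_cast this
  -- real form of the diagonal hypothesis
  have h1 : ∀ i, ∑ k, κ k * (d i - ∑ j, d j * a k j i) = 0 := by
    intro i
    have h := hdiag i
    rw [Matrix.sum_apply] at h
    have hre : ((∑ k, κ k * (d i - ∑ j, d j * a k j i) : ℝ) : ℂ) = 0 := by
      rw [← h]
      push_cast
      refine Finset.sum_congr rfl fun k _ => ?_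
      simp only [Matrix.smul_apply, Matrix.sub_apply, smul_eq_mul]
      congr 1
      rw [hD]
      congr 1
      · simp
      · rw [Matrix.mul_apply]
        refine Finset.sum_congr rfl fun j _ => ?_
        rw [Matrix.mul_diagonal, Matrix.conjTranspose_apply, Complex.star_def]
        rw [show (starRingEnd ℂ) (U k j i) * (d j : ℂ) * U k j i
            = (d j : ℂ) * ((starRingEnd ℂ) (U k j i) * U k j i) by ring,
          ← Complex.normSq_eq_conj_mul_self]
    exact_mod_cast hre
  -- the key sum vanishes
  have hS : ∑ k, ∑ i, ∑ j, κ k * ((d i - d j) ^ 2 * a k j i) = 0 := by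
    have expand : ∀ k i, ∑ j, (d i - d j) ^ 2 * a k j i
        = 2 * (d i * (d i - ∑ j, d j * a k j i)) + (∑ j, d j ^ 2 * a k j i - d i ^ 2) := by
      intro k i
      have h1' : ∑ j, d i ^ 2 * a k j i = d i ^ 2 := by
        rw [← Finset.mul_sum, hcol, mul_one]
      have h2' : ∑ j, d i * (d j * a k j i) = d i * ∑ j, d j * a k j i := by
        rw [Finset.mul_sum]
      calc ∑ j, (d i - d j) ^ 2 * a k j i
          = ∑ j, (d i ^ 2 * a k j i - 2 * (d i * (d j * a k j i)) + d j ^ 2 * a k j i) := by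
            refine Finset.sum_congr rfl fun j _ => ?_; ring
        _ = d i ^ 2 - 2 * (d i * ∑ j, d j * a k j i) + ∑ j, d j ^ 2 * a k j i := by
            rw [Finset.sum_add_distrib, Finset.sum_sub_distrib, h1', ← Finset.mul_sum, h2']
        _ = 2 * (d i * (d i - ∑ j, d j * a k j i)) + (∑ j, d j ^ 2 * a k j i - d i ^ 2) := by
            ring
    have hsq : ∀ k, ∑ i, (∑ j, d j ^ 2 * a k j i - d i ^ 2) = 0 := by
      intro k
      rw [Finset.sum_sub_distrib, Finset.sum_comm]
      have : ∀ j, ∑ i, d j ^ 2 * a k j i = d j ^ 2 := by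
        intro j; rw [← Finset.mul_sum, hrow, mul_one]
      rw [Finset.sum_congr rfl fun j _ => this j, sub_self]
    calc ∑ k, ∑ i, ∑ j, κ k * ((d i - d j) ^ 2 * a k j i)
        = ∑ k, κ k * ∑ i, ∑ j, (d i - d j) ^ 2 * a k j i := by
          refine Finset.sum_congr rfl fun k _ => ?_
          rw [Finset.mul_sum]
          exact Finset.sum_congr rfl fun i _ => (Finset.mul_sum _ _ _).symm
      _ = ∑ k, κ k * ∑ i, 2 * (d i * (d i - ∑ j, d j * a k j i)) := by
          refine Finset.sum_congr rfl fun k _ => ?_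
          congr 1
          rw [Finset.sum_congr rfl fun i _ => expand k i, Finset.sum_add_distrib, hsq k,
            add_zero]
      _ = ∑ i, 2 * d i * ∑ k, κ k * (d i - ∑ j, d j * a k j i) := by
          rw [Finset.sum_congr rfl fun k _ => Finset.mul_sum _ _ _, Finset.sum_comm]
          refine Finset.sum_congr rfl fun i _ => ?_
          rw [Finset.mul_sum]
          refine Finset.sum_congr rfl fun k _ => ?_
          ring
      _ = 0 := by
          refine Finset.sum_eq_zero fun i _ => ?_
          rw [h1 i, mul_zero]
  -- nonnegativity forces every term to vanish
  have hterm : ∀ k i j, (d i - d j) ^ 2 * a k j i = 0 := by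
    have nonneg : ∀ k i j, 0 ≤ κ k * ((d i - d j) ^ 2 * a k j i) := fun k i j =>
      mul_nonneg (hκ k).le (mul_nonneg (sq_nonneg _) (Complex.normSq_nonneg _))
    have hk : ∀ k ∈ (univ : Finset K),
        ∑ i, ∑ j, κ k * ((d i - d j) ^ 2 * a k j i) = 0 :=
      (Finset.sum_eq_zero_iff_of_nonneg fun k _ =>
        Finset.sum_nonneg fun i _ => Finset.sum_nonneg fun j _ => nonneg k i j).mp hS
    intro k i j
    have hi := (Finset.sum_eq_zero_iff_of_nonneg fun i _ =>
      Finset.sum_nonneg fun j _ => nonneg k i j).mp (hk k (mem_univ k)) i (mem_univ i)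
    have hj := (Finset.sum_eq_zero_iff_of_nonneg fun j _ => nonneg k i j).mp hi j (mem_univ j)
    exact (mul_eq_zero.mp hj).resolve_left (ne_of_gt (hκ k))
  -- conclude commutation
  intro k
  ext p q
  rw [hD]
  simp only [Matrix.diagonal_mul, Matrix.mul_diagonal]
  rcases eq_or_ne (U k p q) 0 with h0 | h0
  · simp [h0]
  · have := hterm k q p
    have hnz : a k p q ≠ 0 := fun h => h0 (Complex.normSq_eq_zero.mp h)
    have : (d q - d p) ^ 2 = 0 := (mul_eq_zero.mp this).resolve_right hnz
    have hdq : d q = d p := by nlinarith [sq_nonneg (d q - d p)]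
    rw [hdq, mul_comm]
end

section
/- Participation-ratio formula for the mean fidelity: let ρ_1, …, ρ_N be n×n density matrices with pairwise orthogonal supports, ρ_j ρ_l = 0 for all j ≠ l, let w_1, …, w_N be nonnegative reals with Σ_j w_j = 1, and set σ = Σ_l w_l ρ_l. Then for every j the fidelity satisfies F(ρ_j, σ) = w_j, and consequently Σ_j w_j · F(ρ_j, σ) = Σ_j w_j². -/
open Matrix
open scoped ComplexOrder Classical

/-- The positive semidefinite square root of a positive semidefinite matrix
(junk value `0` on matrices that are not positive semidefinite). -/

noncomputable def msqrt {n : ℕ} (A : Matrix (Fin n) (Fin n) ℂ) :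
    Matrix (Fin n) (Fin n) ℂ :=
  if h : A.PosSemidef then
    (h.1.eigenvectorUnitary : Matrix (Fin n) (Fin n) ℂ) *
      diagonal (fun i => ((Real.sqrt (h.1.eigenvalues i) : ℝ) : ℂ)) *
      (star h.1.eigenvectorUnitary : Matrix (Fin n) (Fin n) ℂ)
  else 0

/-- The fidelity `F(ρ, σ) = (tr √(√ρ σ √ρ))²` between two states. -/
noncomputable def fidelity {n : ℕ} (ρ σ : Matrix (Fin n) (Fin n) ℂ) : ℂ :=
  (Matrix.trace (msqrt (msqrt ρ * σ * msqrt ρ))) ^ 2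

open scoped MatrixOrder in
/-- Replacement for the removed `Matrix.PosSemidef.sqrt`. -/
noncomputable def Matrix.PosSemidef.sqrt {n : ℕ} {A : Matrix (Fin n) (Fin n) ℂ}
    (_hA : A.PosSemidef) : Matrix (Fin n) (Fin n) ℂ := CFC.sqrt A

open scoped MatrixOrder in
lemma Matrix.PosSemidef.posSemidef_sqrt {n : ℕ} {A : Matrix (Fin n) (Fin n) ℂ}
    (hA : A.PosSemidef) : hA.sqrt.PosSemidef :=
  (CFC.sqrt_nonneg A).posSemidef

open scoped MatrixOrder in
lemma Matrix.PosSemidef.sqrt_mul_self {n : ℕ} {A : Matrix (Fin n) (Fin n) ℂ}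
    (hA : A.PosSemidef) : hA.sqrt * hA.sqrt = A :=
  CFC.sqrt_mul_sqrt_self A hA.nonneg

open scoped MatrixOrder in
lemma Matrix.PosSemidef.eq_sqrt_of_sq_eq {n : ℕ} {A : Matrix (Fin n) (Fin n) ℂ}
    (hA : A.PosSemidef) {B : Matrix (Fin n) (Fin n) ℂ} (hB : B.PosSemidef) (h : A ^ 2 = B) :
    A = hB.sqrt :=
  ((CFC.sqrt_eq_iff B A hB.nonneg hA.nonneg).2 (by rw [← h, pow_two])).symm

open scoped MatrixOrder in
lemma msqrt_eq {n : ℕ} {A : Matrix (Fin n) (Fin n) ℂ} (h : A.PosSemidef) :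
    msqrt A = h.sqrt := by
  rw [msqrt, dif_pos h, Matrix.PosSemidef.sqrt, CFC.sqrt_eq_cfc, cfc_nnreal_eq_real _ A, h.1.cfc_eq]
  simp only [IsHermitian.cfc, Unitary.conjStarAlgAut_apply]
  congr 3
  funext i
  simp [Real.coe_sqrt, Real.coe_toNNReal', max_eq_left (h.eigenvalues_nonneg i)]

lemma posSemidef_real_smul {n : ℕ} {A : Matrix (Fin n) (Fin n) ℂ} (hA : A.PosSemidef)
    {c : ℝ} (hc : 0 ≤ c) : ((c : ℂ) • A).PosSemidef := by
  constructor
  · unfold Matrix.IsHermitian; rw [conjTranspose_smul, hA.1]; simp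
  · exact (hA.smul (a := (c : ℂ)) (by exact_mod_cast hc)).2

lemma herm_sq_zero {n : ℕ} {A : Matrix (Fin n) (Fin n) ℂ} (h : A.IsHermitian)
    (h2 : A * A = 0) : A = 0 := by
  rw [← conjTranspose_mul_self_eq_zero (A := A), h.eq, h2]

lemma sqrt_mul_orth {n : ℕ} {A B : Matrix (Fin n) (Fin n) ℂ}
    (hA : A.PosSemidef) (hB : B.PosSemidef)
    (hAB : A * B = 0) (hBA : B * A = 0) : hA.sqrt * B = 0 := by
  set S := hA.sqrt with hS
  set T := hB.sqrt with hT
  have hSh : S.IsHermitian := hA.posSemidef_sqrt.1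
  have hTh : T.IsHermitian := hB.posSemidef_sqrt.1
  have hSS : S * S = A := hA.sqrt_mul_self
  have hTT : T * T = B := hB.sqrt_mul_self
  -- M = T * S ; H = Mᴴ M = S * B * S
  have hH : (T * S)ᴴ * (T * S) = S * B * S := by
    rw [conjTranspose_mul, hSh.eq, hTh.eq, ← hTT]
    simp only [Matrix.mul_assoc]
  have hHherm : (S * B * S).IsHermitian := by
    unfold Matrix.IsHermitian
    simp [conjTranspose_mul, hSh.eq, hB.1.eq, Matrix.mul_assoc]
  have hHsq : (S * B * S) * (S * B * S) = 0 := by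
    have : S * (B * ((S * S) * (B * S))) = 0 := by
      rw [hSS, ← Matrix.mul_assoc B A, hBA]
      simp [Matrix.mul_assoc]
    calc (S * B * S) * (S * B * S) = S * (B * ((S * S) * (B * S))) := by
          simp only [Matrix.mul_assoc]
      _ = 0 := this
  have hH0 : S * B * S = 0 := herm_sq_zero hHherm hHsq
  have hM0 : T * S = 0 := by
    rw [← conjTranspose_mul_self_eq_zero (A := T * S), hH, hH0]
  have hST : S * T = 0 := by
    have := congrArg conjTranspose hM0
    simpa [conjTranspose_mul, hSh.eq, hTh.eq] using this
  calc S * B = (S * T) * T := by rw [Matrix.mul_assoc, hTT]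
    _ = 0 := by rw [hST, Matrix.zero_mul]

/-- Participation-ratio formula for the mean fidelity: for density matrices
with pairwise orthogonal supports and weights `w_j` summing to one,
`F(ρ_j, Σ_l w_l ρ_l) = w_j`, hence `Σ_j w_j F(ρ_j, σ) = Σ_j w_j²`. -/
theorem mean_fidelity_participation_ratio {n N : ℕ}
    (ρ : Fin N → Matrix (Fin n) (Fin n) ℂ)
    (hρ : ∀ j, (ρ j).PosSemidef ∧ (ρ j).trace = 1)
    (horth : ∀ j l, j ≠ l → ρ j * ρ l = 0)
    (w : Fin N → ℝ) (hw : ∀ j, 0 ≤ w j) (hsum : ∑ j, w j = 1) :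
    (∀ j, fidelity (ρ j) (∑ l, (w l : ℂ) • ρ l) = (w j : ℂ)) ∧
      ∑ j, (w j : ℂ) * fidelity (ρ j) (∑ l, (w l : ℂ) • ρ l) =
        ∑ j, ((w j : ℂ)) ^ 2 := by
  have key : ∀ j, fidelity (ρ j) (∑ l, (w l : ℂ) • ρ l) = (w j : ℂ) := by
    intro j
    obtain ⟨hpsd, htr⟩ := hρ j
    set S := hpsd.sqrt with hSdef
    have hmsqrtρ : msqrt (ρ j) = S := msqrt_eq hpsd
    have hSS : S * S = ρ j := hpsd.sqrt_mul_self
    -- S * ρ l = 0 for l ≠ j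
    have hSl : ∀ l, l ≠ j → S * ρ l = 0 := fun l hl =>
      sqrt_mul_orth hpsd (hρ l).1 (horth j l (Ne.symm hl)) (horth l j hl)
    -- inner matrix
    have hinner : S * (∑ l, (w l : ℂ) • ρ l) * S = (w j : ℂ) • (ρ j * ρ j) := by
      rw [Matrix.mul_sum, Matrix.sum_mul]
      rw [Finset.sum_eq_single j]
      · rw [Matrix.mul_smul, Matrix.smul_mul]
        congr 1
        calc S * ρ j * S = (S * S) * (S * S) := by
              rw [← hSS]; simp only [Matrix.mul_assoc]
          _ = ρ j * ρ j := by rw [hSS]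
      · intro l _ hl
        rw [Matrix.mul_smul, hSl l hl, Matrix.smul_mul, Matrix.zero_mul, smul_zero]
      · intro h; exact absurd (Finset.mem_univ j) h
    -- the square root of the inner matrix
    set B := ((Real.sqrt (w j) : ℂ)) • ρ j with hBdef
    have hBpsd : B.PosSemidef := posSemidef_real_smul hpsd (Real.sqrt_nonneg _)
    have hBsq : B ^ 2 = (w j : ℂ) • (ρ j * ρ j) := by
      rw [hBdef, pow_two, Matrix.smul_mul, Matrix.mul_smul, smul_smul]
      congr 1
      rw [← Complex.ofReal_mul, Real.mul_self_sqrt (hw j)]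
    have hApsd : ((w j : ℂ) • (ρ j * ρ j)).PosSemidef := by
      rw [← hBsq]; exact hBpsd.pow 2
    have hmsqrtA : msqrt ((w j : ℂ) • (ρ j * ρ j)) = B := by
      rw [msqrt_eq hApsd]
      exact (hBpsd.eq_sqrt_of_sq_eq hApsd hBsq).symm
    rw [fidelity, hmsqrtρ, hinner, hmsqrtA, hBdef, trace_smul, htr, smul_eq_mul,
      mul_one, ← Complex.ofReal_pow, Real.sq_sqrt (hw j)]
  refine ⟨key, ?_⟩
  exact Finset.sum_congr rfl fun j _ => by rw [key j, pow_two]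
end

section
/- Let X be a Hermitian n×n complex matrix and let S be a set of nonzero vectors in ℂⁿ, each of which is an eigenvector of X. Suppose there do not exist two nonzero mutually orthogonal subspaces V₁, V₂ of ℂⁿ with V₁ ⊕ V₂ = ℂⁿ such that every element of S lies in V₁ or in V₂. Then X = r·1 for some real number r, i.e. all elements of S share a common real eigenvalue and X is that multiple of the identity. -/
open Matrix

/-- If every element of a set `S` of nonzero vectors is an eigenvector of a
Hermitian matrix `X`, and there is no splitting of `ℂⁿ` into two nonzero
mutually orthogonal subspaces such that each element of `S` lies in one of
them, then `X` is a real multiple of the identity. -/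
theorem eq_smul_one_of_no_orthogonal_splitting {n : ℕ}
    (X : Matrix (Fin n) (Fin n) ℂ) (hX : X.IsHermitian)
    (S : Set (Fin n → ℂ))
    (hS0 : ∀ v ∈ S, v ≠ 0)
    (hSeig : ∀ v ∈ S, ∃ μ : ℂ, X.mulVec v = μ • v)
    (hno : ¬ ∃ V₁ V₂ : Submodule ℂ (Fin n → ℂ),
        V₁ ≠ ⊥ ∧ V₂ ≠ ⊥ ∧
        (∀ x ∈ V₁, ∀ y ∈ V₂, dotProduct (star x) y = 0) ∧
        V₁ ⊔ V₂ = ⊤ ∧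
        (∀ v ∈ S, v ∈ V₁ ∨ v ∈ V₂)) :
    ∃ r : ℝ, X = (r : ℂ) • 1 := by
  rcases Nat.eq_zero_or_pos n with h0 | hn
  · subst h0
    exact ⟨0, by ext i; exact i.elim0⟩
  have i₀ : Fin n := ⟨0, hn⟩
  set μ : ℝ := hX.eigenvalues i₀ with hμ
  set f : (Fin n → ℂ) →ₗ[ℂ] (Fin n → ℂ) := X.mulVecLin with hf
  set V₁ : Submodule ℂ (Fin n → ℂ) := Module.End.eigenspace f (μ : ℂ) with hV₁
  -- every eigenvector-basis element lies in the corresponding eigenspace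
  have heigmem : ∀ i : Fin n, (hX.eigenvectorBasis i : Fin n → ℂ) ∈
      Module.End.eigenspace f ((hX.eigenvalues i : ℂ)) := by
    intro i
    rw [Module.End.mem_eigenspace_iff]
    have h := hX.mulVec_eigenvectorBasis i
    show X *ᵥ _ = _
    ext k
    have := congrFun h k
    simpa [Complex.real_smul] using this
  -- Hermitian matrices move across dot products
  have hswap : ∀ x y : Fin n → ℂ, star (X *ᵥ x) ⬝ᵥ y = star x ⬝ᵥ (X *ᵥ y) := by
    intro x y
    rw [star_mulVec, hX.eq, ← dotProduct_mulVec]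
  by_cases htop : V₁ = ⊤
  · refine ⟨μ, ?_⟩
    ext i j
    have hj : (Pi.single j 1 : Fin n → ℂ) ∈ V₁ := htop ▸ Submodule.mem_top
    have h2 : X *ᵥ (Pi.single j 1 : Fin n → ℂ)
        = (μ : ℂ) • (Pi.single j 1 : Fin n → ℂ) :=
      Module.End.mem_eigenspace_iff.mp hj
    have := congrFun h2 i
    simpa [Matrix.one_apply, Pi.single_apply, mul_comm] using this
  · exfalso
    apply hno
    set V₂ : Submodule ℂ (Fin n → ℂ) :=
      ⨆ ν ∈ {ν : ℂ | ν ≠ (μ : ℂ)}, Module.End.eigenspace f ν with hV₂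
    -- basis vectors lie in V₁ ⊔ V₂
    have hb : ∀ i : Fin n, (hX.eigenvectorBasis i : Fin n → ℂ) ∈ V₁ ⊔ V₂ := by
      intro i
      by_cases hc : (hX.eigenvalues i : ℂ) = (μ : ℂ)
      · exact Submodule.mem_sup_left (by rw [hV₁, ← hc]; exact heigmem i)
      · exact Submodule.mem_sup_right (Submodule.mem_iSup_of_mem _
          (Submodule.mem_iSup_of_mem hc (heigmem i)))
    have hsup : V₁ ⊔ V₂ = ⊤ := by
      rw [eq_top_iff]
      have hspan : Submodule.span ℂ
          (Set.range fun i => (hX.eigenvectorBasis i : Fin n → ℂ)) = ⊤ :=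
        by
          have := ((hX.eigenvectorBasis).toBasis.map (WithLp.linearEquiv 2 ℂ (Fin n → ℂ))).span_eq
          have hfun : (fun i => (hX.eigenvectorBasis i : Fin n → ℂ)) =
              ⇑((hX.eigenvectorBasis).toBasis.map (WithLp.linearEquiv 2 ℂ (Fin n → ℂ))) := by
            funext i
            simp [OrthonormalBasis.coe_toBasis]
          rw [hfun]
          exact this
      rw [← hspan]
      apply Submodule.span_le.mpr
      rintro _ ⟨i, rfl⟩
      exact hb i
    -- orthogonality of V₁ and V₂
    have horth : ∀ x ∈ V₁, ∀ y ∈ V₂, dotProduct (star x) y = 0 := by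
      intro x hx y hy
      have hx' : X *ᵥ x = (μ : ℂ) • x := Module.End.mem_eigenspace_iff.mp hx
      let L : (Fin n → ℂ) →ₗ[ℂ] ℂ :=
        { toFun := fun y => dotProduct (star x) y
          map_add' := fun a b => dotProduct_add _ _ _
          map_smul' := fun c a => by simp [dotProduct_smul] }
      have hle : V₂ ≤ LinearMap.ker L := by
        apply iSup₂_le
        intro ν hν z hz
        have hz' : X *ᵥ z = ν • z := Module.End.mem_eigenspace_iff.mp hz
        have key : star (X *ᵥ x) ⬝ᵥ z = star x ⬝ᵥ (X *ᵥ z) := hswap x z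
        rw [hx', hz'] at key
        simp only [star_smul, smul_dotProduct, dotProduct_smul, smul_eq_mul,
          RCLike.star_def, Complex.conj_ofReal] at key
        have hzero : ((μ : ℂ) - ν) * (star x ⬝ᵥ z) = 0 := by
          linear_combination key
        rcases mul_eq_zero.mp hzero with h | h
        · exact absurd (by linear_combination -h : ν = (μ : ℂ)) hν
        · exact h
      exact hle hy
    have hV₁ne : V₁ ≠ ⊥ := by
      intro hbot
      have h1 : (hX.eigenvectorBasis i₀ : Fin n → ℂ) ∈ V₁ := heigmem i₀
      rw [hbot, Submodule.mem_bot] at h1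
      exact (hX.eigenvectorBasis).toBasis.ne_zero i₀
        (by simpa [OrthonormalBasis.coe_toBasis] using h1)
    have hV₂ne : V₂ ≠ ⊥ := by
      intro hbot
      rw [hbot, sup_bot_eq] at hsup
      exact htop hsup
    refine ⟨V₁, V₂, hV₁ne, hV₂ne, horth, hsup, ?_⟩
    intro v hv
    obtain ⟨ν, hνv⟩ := hSeig v hv
    by_cases hc : ν = (μ : ℂ)
    · left
      rw [hV₁, Module.End.mem_eigenspace_iff]
      show X *ᵥ v = _
      rw [hνv, hc]
    · right
      exact Submodule.mem_iSup_of_mem _ (Submodule.mem_iSup_of_mem hc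
        (Module.End.mem_eigenspace_iff.mpr hνv))
end
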